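/- Zero entropy in the degenerate binary case. Let u, v ∈ {0,1}^ℕ satisfy u₀ = 0, v₀ = 1, u ≼ σⁿu ≼ v and u ≼ σⁿv ≼ v for all n ≥ 0, and σv ≺ σu. Then h(Σ(u,v)) = 0. -/

import Mathlib

open Filter Set

/-- The shift map on one-sided sequences. -/
def shft (x : ℕ → ℕ) : ℕ → ℕ := fun n => x (n + 1)

/-- Strict lexicographic order on one-sided sequences:
`x ≺ y` iff they differ and `x m < y m` at the first index `m` where they differ. -/
def lexLt (x y : ℕ → ℕ) : Prop := ∃ m, (∀ i, i < m → x i = y i) ∧ x m < y m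

/-- Lexicographic order `x ≼ y` on one-sided sequences. -/
def lexLe (x y : ℕ → ℕ) : Prop := x = y ∨ lexLt x y

/-- The map `φ̄^{α,β} : ℝ → [0,1]`:  `0` for `t ≤ α`, `(t-α)/β` for `α ≤ t ≤ α+β`,
`1` for `t ≥ α+β`. -/
noncomputable def phiB (α β t : ℝ) : ℝ :=
  if t ≤ α then 0 else if α + β ≤ t then 1 else (t - α) / β

/-- `φ̄ₙ^{α,β}(x) = φ̄^{α,β}(x₀ + φ̄^{α,β}(x₁ + ⋯ + φ̄^{α,β}(x_{n-1})⋯))`. -/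
noncomputable def phiBN (α β : ℝ) : ℕ → (ℕ → ℕ) → ℝ
  | 0, _ => 0
  | n + 1, x => phiB α β (x 0 + phiBN α β n (shft x))

/-- `φ̄_∞^{α,β}(x) = limₙ φ̄ₙ^{α,β}(x)`; the sequence `φ̄ₙ^{α,β}(x)` is nondecreasing in `n`
and bounded, so its limit is its supremum. -/
noncomputable def phiBInf (α β : ℝ) (x : ℕ → ℕ) : ℝ := ⨆ n, phiBN α β n x

/-- `T̂_{α,β}(x) = βx + α − ⌊βx + α⌋`. -/
noncomputable def Tlow (α β x : ℝ) : ℝ := β * x + α - ⌊β * x + α⌋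

/-- `Ť_{α,β}(x) = βx + α + 1 − ⌈βx + α⌉`. -/
noncomputable def Thigh (α β x : ℝ) : ℝ := β * x + α + 1 - ⌈β * x + α⌉

/-- `k = ⌈α + β⌉`, the size of the alphabet `A = {0, …, k-1}`. -/
noncomputable def kAB (α β : ℝ) : ℕ := (⌈α + β⌉).toNat

/-- The string `u^{α,β}`, the coding of the orbit of `0`:
`u^{α,β}ₙ = ⌊β T̂ⁿ_{α,β}(0) + α⌋`. -/
noncomputable def uItin (α β : ℝ) : ℕ → ℕ := fun n => (⌊β * (Tlow α β)^[n] 0 + α⌋).toNat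

/-- The string `v^{α,β}`, the coding of the orbit of `1`:
`v^{α,β}ₙ = ⌈β Ťⁿ_{α,β}(1) + α⌉ − 1`. -/
noncomputable def vItin (α β : ℝ) : ℕ → ℕ := fun n => (⌈β * (Thigh α β)^[n] 1 + α⌉ - 1).toNat

/-- The shift space `Σ(u,v) = {x ∈ A^ℕ : u ≼ σⁿx ≼ v for all n ≥ 0}`, `A = {0,…,k-1}`. -/
def SigSet (k : ℕ) (u v : ℕ → ℕ) : Set (ℕ → ℕ) :=
  {x | (∀ i, x i < k) ∧ ∀ n, lexLe u (shft^[n] x) ∧ lexLe (shft^[n] x) v}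

/-- The number of words of length `n` in the language of `Σ(u,v)` (prefixes of elements). -/
noncomputable def nWords (k : ℕ) (u v : ℕ → ℕ) (n : ℕ) : ℕ :=
  Nat.card {w : Fin n → ℕ // ∃ x ∈ SigSet k u v, ∀ i : Fin n, x i.1 = w i}

/-- The topological entropy (base 2) of `Σ(u,v)`:
`h = limₙ (1/n) log₂ card(Lₙ)` (the limit exists by subadditivity, so it equals the limsup;
it is `0` when `Σ(u,v) = ∅`). -/
noncomputable def entS (k : ℕ) (u v : ℕ → ℕ) : ℝ :=
  Filter.limsup (fun n : ℕ => Real.logb 2 (nWords k u v n) / (n : ℝ)) Filter.atTop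

/-- Concatenation of the word `w₀ ⋯ w_{p-1}` (the first `p` letters of `w`) with the
string `y`. -/
def wcat (p : ℕ) (w y : ℕ → ℕ) : ℕ → ℕ := fun n => if n < p then w n else y (n - p)

/-!
A point of `Σ(u,v)` reads `0` at `n` only if its tail from `n + 1` is `≽ σu`, and `1` only if
that tail is `≼ σv`. Since `σv ≺ σu`, with first difference at some index `m`, the two cases are
told apart by the next `m + 1` letters, so each letter is determined by the `m + 1` letters that
follow it. Hence a word of the language is determined by its last `m + 1` letters, the number of
words of each length is at most `2 ^ (m + 1)`, and the entropy vanishes.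
-/

open Topology

lemma shft_iterate_apply (k : ℕ) (x : ℕ → ℕ) (i : ℕ) : shft^[k] x i = x (i + k) := by
  induction k generalizing x with
  | zero => rfl
  | succ k ih => rw [Function.iterate_succ_apply, ih]; rfl

section Lex

variable {a b c y z : ℕ → ℕ}

lemma lexLt_irrefl (a : ℕ → ℕ) : ¬ lexLt a a :=
  fun ⟨_, _, h⟩ => lt_irrefl _ h

lemma lexLt_trans (hab : lexLt a b) (hbc : lexLt b c) : lexLt a c := by
  obtain ⟨j, hj, hjab⟩ := hab
  obtain ⟨k, hk, hkbc⟩ := hbc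
  refine ⟨min j k, fun i hi => (hj i (by omega)).trans (hk i (by omega)), ?_⟩
  rcases lt_trichotomy j k with hjk | rfl | hjk
  · rw [min_eq_left hjk.le]; exact hjab.trans_le (hk j hjk).le
  · rw [min_self]; exact hjab.trans hkbc
  · rw [min_eq_right hjk.le, hj k hjk]; exact hkbc

lemma lexLe_trans (hab : lexLe a b) (hbc : lexLe b c) : lexLe a c := by
  rcases hab with rfl | hab
  · exact hbc
  rcases hbc with rfl | hbc
  · exact Or.inr hab
  · exact Or.inr (lexLt_trans hab hbc)

lemma not_lexLt_of_lexLe (hab : lexLe a b) : ¬ lexLt b a := by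
  rcases hab with rfl | hab
  · exact lexLt_irrefl a
  · exact fun hba => lexLt_irrefl a (lexLt_trans hab hba)

lemma lexLe_shft_of_head_eq (hab : lexLe a b) (h0 : a 0 = b 0) : lexLe (shft a) (shft b) := by
  rcases hab with rfl | ⟨_ | j, hj, hjab⟩
  · exact Or.inl rfl
  · exact absurd h0 hjab.ne
  · exact Or.inr ⟨j, fun i hi => hj (i + 1) (by omega), hjab⟩

lemma wcat_congr_left {p : ℕ} (h : ∀ i < p, a i = b i) (y : ℕ → ℕ) :
    wcat p a y = wcat p b y := by
  funext n
  unfold wcat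
  split_ifs with hn
  exacts [h n hn, rfl]

lemma lexLt_wcat_left {p m : ℕ} (hmp : m < p) (heq : ∀ i < m, a i = b i) (hlt : a m < b m)
    (y : ℕ → ℕ) : lexLt (wcat p a y) (wcat p b y) :=
  ⟨m, fun i hi => by simp only [wcat, if_pos (hi.trans hmp), heq i hi],
    by simpa only [wcat, if_pos hmp] using hlt⟩

lemma lexLe_wcat_left (p : ℕ) (hab : lexLe a b) (y : ℕ → ℕ) :
    lexLe (wcat p a y) (wcat p b y) := by
  rcases hab with rfl | ⟨j, hj, hjab⟩
  · exact Or.inl rfl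
  by_cases hjp : j < p
  · exact Or.inr (lexLt_wcat_left hjp hj hjab y)
  · exact Or.inl (wcat_congr_left (fun i hi => hj i (by omega)) y)

/-- Truncating everything after index `m` keeps `a ≼ y`, `z ≼ b` and `b ≺ a`, so `y` and `z`
cannot have the same first `m + 1` letters. -/
lemma exists_lt_succ_ne_of_lexLe_of_lexLe {m : ℕ} (hba : ∀ i < m, b i = a i) (hm : b m < a m)
    (hay : lexLe a y) (hzb : lexLe z b) : ∃ i < m + 1, y i ≠ z i := by
  by_contra! hyz
  have hle : lexLe (wcat (m + 1) a 0) (wcat (m + 1) b 0) := by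
    refine lexLe_trans (lexLe_wcat_left _ hay 0) ?_
    rw [wcat_congr_left hyz]
    exact lexLe_wcat_left _ hzb 0
  exact not_lexLt_of_lexLe hle (lexLt_wcat_left m.lt_succ_self hba hm 0)

end Lex

namespace SigSet

variable {k m : ℕ} {u v x x' : ℕ → ℕ}

lemma lexLe_iterate_succ (hx : x ∈ SigSet k u v) {n : ℕ} (hxn : x n = u 0) :
    lexLe (shft u) (shft^[n + 1] x) := by
  rw [Function.iterate_succ_apply']
  exact lexLe_shft_of_head_eq (hx.2 n).1 (by rw [shft_iterate_apply, zero_add, hxn])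

lemma iterate_succ_lexLe (hx : x ∈ SigSet k u v) {n : ℕ} (hxn : x n = v 0) :
    lexLe (shft^[n + 1] x) (shft v) := by
  rw [Function.iterate_succ_apply']
  exact lexLe_shft_of_head_eq (hx.2 n).2 (by rw [shft_iterate_apply, zero_add, hxn])

lemma apply_eq_of_eqOn_next (hu0 : u 0 = 0) (hv0 : v 0 = 1)
    (hvu : ∀ i < m, shft v i = shft u i) (hm : shft v m < shft u m) (hx : x ∈ SigSet 2 u v) (hx' : x' ∈ SigSet 2 u v) {n : ℕ}
    (h : ∀ i < m + 1, x (i + (n + 1)) = x' (i + (n + 1))) : x n = x' n := by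
  have not_zero_one : ∀ {y y' : ℕ → ℕ}, y ∈ SigSet 2 u v → y' ∈ SigSet 2 u v →
      (∀ i < m + 1, y (i + (n + 1)) = y' (i + (n + 1))) → y n = 0 → y' n = 1 → False := by
    intro y y' hy hy' hyy' hy0 hy1
    obtain ⟨i, hi, hne⟩ := exists_lt_succ_ne_of_lexLe_of_lexLe hvu hm
      (lexLe_iterate_succ hy (hy0.trans hu0.symm)) (iterate_succ_lexLe hy' (hy1.trans hv0.symm))
    rw [shft_iterate_apply, shft_iterate_apply] at hne
    exact hne (hyy' i hi)
  have := hx.1 n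
  have := hx'.1 n
  by_contra hne
  rcases (by omega : x n = 0 ∧ x' n = 1 ∨ x' n = 0 ∧ x n = 1) with ⟨h0, h1⟩ | ⟨h0, h1⟩
  · exact not_zero_one hx hx' h h0 h1
  · exact not_zero_one hx' hx (fun i hi => (h i hi).symm) h0 h1

lemma eqOn_of_eqOn_window (hu0 : u 0 = 0) (hv0 : v 0 = 1)
    (hvu : ∀ i < m, shft v i = shft u i) (hm : shft v m < shft u m) (hx : x ∈ SigSet 2 u v) (hx' : x' ∈ SigSet 2 u v) (j : ℕ)
    (h : ∀ i, j ≤ i → i < j + (m + 1) → x i = x' i) : ∀ i < j + (m + 1), x i = x' i := by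
  induction j with
  | zero => exact fun i hi => h i i.zero_le hi
  | succ j ih =>
    have hj : x j = x' j :=
      apply_eq_of_eqOn_next hu0 hv0 hvu hm hx hx' fun i hi => h _ (by omega) (by omega)
    intro i hi
    rcases lt_or_ge i (j + 1) with hij | hij
    · refine ih (fun i' hji' hi' => ?_) i (by omega)
      rcases hji'.eq_or_lt with rfl | hji'
      exacts [hj, h i' hji' (by omega)]
    · exact h i hij hi

end SigSet

lemma nWords_le_two_pow {m : ℕ} {u v : ℕ → ℕ} (hu0 : u 0 = 0) (hv0 : v 0 = 1)
    (hvu : ∀ i < m, shft v i = shft u i) (hm : shft v m < shft u m) {n : ℕ} (hn : m + 1 ≤ n) :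
    nWords 2 u v n ≤ 2 ^ (m + 1) := by
  let suffix : {w : Fin n → ℕ // ∃ x ∈ SigSet 2 u v, ∀ i : Fin n, x i.1 = w i} →
      Fin (m + 1) → Fin 2 :=
    fun w j => ⟨w.1 ⟨n - (m + 1) + j, by omega⟩ % 2, Nat.mod_lt _ two_pos⟩
  have suffix_injective : Function.Injective suffix := by
    rintro ⟨w, x, hx, hxw⟩ ⟨w', x', hx', hxw'⟩ h
    have hwindow : ∀ i, n - (m + 1) ≤ i → i < n - (m + 1) + (m + 1) → x i = x' i := by
      intro i hi hin
      obtain ⟨j, rfl⟩ := Nat.exists_eq_add_of_le hi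
      have hj := congrArg Fin.val (congrFun h ⟨j, by omega⟩)
      simp only [suffix, ← hxw, ← hxw'] at hj
      rwa [Nat.mod_eq_of_lt (hx.1 _), Nat.mod_eq_of_lt (hx'.1 _)] at hj
    refine Subtype.ext (funext fun i => ?_)
    change w i = w' i
    rw [← hxw, ← hxw']
    exact SigSet.eqOn_of_eqOn_window hu0 hv0 hvu hm hx hx' _ hwindow i (by omega)
  simpa [nWords] using Nat.card_le_card_of_injective suffix suffix_injective

lemma tendsto_logb_div_of_eventually_le {f : ℕ → ℕ} {C : ℕ} (hf : ∀ᶠ n in atTop, f n ≤ C) :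
    Tendsto (fun n : ℕ => Real.logb 2 (f n) / n) atTop (𝓝 0) := by
  have logb_nonneg (a : ℕ) : 0 ≤ Real.logb 2 a :=
    div_nonneg (Real.log_natCast_nonneg a) (Real.log_nonneg one_le_two)
  refine tendsto_of_tendsto_of_tendsto_of_le_of_le' tendsto_const_nhds
    (tendsto_const_div_atTop_nhds_zero_nat (Real.logb 2 C))
    (Eventually.of_forall fun n => div_nonneg (logb_nonneg _) n.cast_nonneg) ?_
  filter_upwards [hf] with n hn
  refine div_le_div_of_nonneg_right ?_ n.cast_nonneg
  rcases (f n).eq_zero_or_pos with h0 | hpos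
  · simpa [h0] using logb_nonneg C
  · exact Real.logb_le_logb_of_le one_lt_two (by exact_mod_cast hpos) (by exact_mod_cast hn)

theorem zero_entropy_degenerate_binary_general (u v : ℕ → ℕ)
    (hu0 : u 0 = 0) (hv0 : v 0 = 1)
    (hlt : lexLt (shft v) (shft u)) :
    entS 2 u v = 0 := by
  obtain ⟨m, hvu, hm⟩ := hlt
  have hbounded : ∀ᶠ n in atTop, nWords 2 u v n ≤ 2 ^ (m + 1) :=
    (eventually_ge_atTop (m + 1)).mono fun _ hn => nWords_le_two_pow hu0 hv0 hvu hm hn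
  exact (tendsto_logb_div_of_eventually_le hbounded).limsup_eq

/-- **Zero entropy in the degenerate binary case.** Let `u, v ∈ {0,1}^ℕ` satisfy
`u₀ = 0`, `v₀ = 1`, `u ≼ σⁿu ≼ v` and `u ≼ σⁿv ≼ v` for all `n ≥ 0`, and `σv ≺ σu`.
Then `h(Σ(u,v)) = 0`. -/
theorem zero_entropy_degenerate_binary (u v : ℕ → ℕ)
    (hu : ∀ i, u i < 2) (hv : ∀ i, v i < 2)
    (hu0 : u 0 = 0) (hv0 : v 0 = 1)
    (hcond : ∀ n, lexLe u (shft^[n] u) ∧ lexLe (shft^[n] u) v ∧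
                  lexLe u (shft^[n] v) ∧ lexLe (shft^[n] v) v)
    (hlt : lexLt (shft v) (shft u)) :
    entS 2 u v = 0 :=
  zero_entropy_degenerate_binary_general u v hu0 hv0 hlt
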